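/- arXiv:2201.03373 — 2 statements merged into one kernel-verified Lean document; each statement's English description precedes it below -/
import Mathlib

section
/- There exists a constant c₀ > 0, independent of γ, such that for every γ > 0 and every p ∈ ℝ, lim_{B→0⁺} Φ_B(p) = −c₀·γ^{−3/2}·|p|^{3/2}. -/
/-!
For `B > 0` the map `t ↦ (2√(t² + B²/4) + εB) t` is an odd increasing bijection of `ℝ`, so
`x_{B,ε}(r)` is its inverse evaluated at `π/(γr)`, and by the chain rule and the fundamental
theorem of calculus `g_{B,ε}(r) = ψ(x) / (4γr² F'(x))` at `x = x_{B,ε}(r)`, where `ψ` is the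
integrand of `h_{B,ε}` and `F` the map above. As `B → 0⁺`, `2x² → π/(γr)`, whence
`g_{B,+} + g_{B,-} → κ r^{-5/2}` with `κ = √(π/(2γ))/(16γ)`, while `C (r^{-5/2} + r^{-2})`
dominates these functions uniformly in `B ≤ 1`. Dominated convergence, first in `τ` and then
in `r` (where `|cos(pr) - 1| ≲ min(1, r²)` absorbs the singularity at `0`), passes to the limit
in `Φ_B`. For the pure power `κ s^{-5/2}` the `τ`-integral is `Γ(5/2)`, the substitution
`r ↦ r/|p|` gives `Φ(p) = -2κ Γ(5/2) (2π)^{-5/2} J |p|^{3/2}` with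
`J = ∫₀^∞ (1 - cos u) u^{-5/2} du > 0`, and the constant equals `c₀ γ^{-3/2}` with
`c₀ = Γ(5/2) J / (64π²)`.
-/

open Filter Topology MeasureTheory Set

namespace SmallFieldLimit

open Real

lemma integrableOn_min_one_sq_mul_rpow {β : ℝ} (hβ : β ∈ Ioo 1 3) :
    IntegrableOn (fun r : ℝ => min 1 (r ^ 2) * r ^ (-β)) (Ioi 0) := by
  rw [← Ioc_union_Ioi_eq_Ioi zero_le_one, integrableOn_union]
  constructor
  · have h : IntegrableOn (fun r : ℝ => r ^ (2 - β)) (Ioc 0 1) := by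
      rw [integrableOn_Ioc_iff_integrableOn_Ioo, intervalIntegral.integrableOn_Ioo_rpow_iff one_pos]
      linarith [hβ.2]
    refine h.congr_fun (fun r hr => ?_) measurableSet_Ioc
    have : r ^ 2 ≤ 1 := by nlinarith [hr.1, hr.2]
    change r ^ (2 - β) = min 1 (r ^ 2) * r ^ (-β)
    rw [min_eq_right this, sub_eq_add_neg, rpow_add hr.1, rpow_two]
  · have h : IntegrableOn (fun r : ℝ => r ^ (-β)) (Ioi 1) :=
      integrableOn_Ioi_rpow_of_lt (by linarith [hβ.1]) one_pos
    refine h.congr_fun (fun r hr => ?_) measurableSet_Ioi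
    have : 1 ≤ r ^ 2 := by nlinarith [mem_Ioi.1 hr]
    rw [min_eq_left this, one_mul]

lemma abs_cos_mul_sub_one_le (p r : ℝ) : |cos (p * r) - 1| ≤ 2 * (1 + p ^ 2) * min 1 (r ^ 2) := by
  have h₁ := cos_le_one (p * r)
  have h₂ := neg_one_le_cos (p * r)
  have h₃ := one_sub_sq_div_two_le_cos (x := p * r)
  rw [abs_of_nonpos (by linarith)]
  rcases le_total 1 (r ^ 2) with h | h
  · rw [min_eq_left h]; nlinarith [sq_nonneg p]
  · rw [min_eq_right h]; nlinarith [sq_nonneg p, sq_nonneg r, mul_pow p r 2]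

lemma exp_neg_mul_inv_mul_div_rpow {a τ : ℝ} (β : ℝ) (ha : 0 < a) (hτ : 0 < τ) :
    exp (-τ) * τ⁻¹ * (a / τ) ^ (-β) = a ^ (-β) * (exp (-τ) * τ ^ (β - 1)) := by
  rw [div_rpow ha.le hτ.le, rpow_neg hτ.le, rpow_sub_one hτ.ne']
  field_simp

lemma rpow_neg_nat_add_half {s : ℝ} (hs : 0 < s) (n : ℕ) :
    s ^ (-((n : ℝ) + 1 / 2)) = (s ^ n * √s)⁻¹ := by
  rw [rpow_neg hs.le, rpow_add hs, rpow_natCast, ← sqrt_eq_rpow]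

noncomputable def subordinatedKernel (w : ℝ → ℝ) (r : ℝ) : ℝ :=
  ∫ τ in Ioi 0, exp (-τ) * τ⁻¹ * w (2 * π * r / τ)

/-- `Φ_B = levyExponent (g_{B,+} + g_{B,-})`; `subordinatedKernel w` is its Lévy density. -/
noncomputable def levyExponent (w : ℝ → ℝ) (p : ℝ) : ℝ :=
  2 * ∫ r in Ioi 0, (cos (p * r) - 1) * subordinatedKernel w r

lemma levyExponent_congr {w w' : ℝ → ℝ} (h : EqOn w w' (Ioi 0)) (p : ℝ) :
    levyExponent w p = levyExponent w' p := by
  unfold levyExponent subordinatedKernel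
  congr 1
  refine setIntegral_congr_fun measurableSet_Ioi fun r (hr : 0 < r) => ?_
  congr 1
  refine setIntegral_congr_fun measurableSet_Ioi fun τ (hτ : 0 < τ) => ?_
  rw [h (show 0 < 2 * π * r / τ by positivity)]

section DominatedConvergence

variable {r : ℝ}

lemma abs_kernelIntegrand_le {w M : ℝ → ℝ} (hwM : ∀ s, 0 < s → |w s| ≤ M s) (hr : 0 < r)
    {τ : ℝ} (hτ : 0 < τ) :
    ‖exp (-τ) * τ⁻¹ * w (2 * π * r / τ)‖ ≤ exp (-τ) * τ⁻¹ * M (2 * π * r / τ) := by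
  rw [Real.norm_eq_abs, abs_mul, abs_of_pos (by positivity : 0 < exp (-τ) * τ⁻¹)]
  exact mul_le_mul_of_nonneg_left (hwM _ (by positivity)) (by positivity)

lemma abs_subordinatedKernel_le {w M : ℝ → ℝ}
    (hM : IntegrableOn (fun τ => exp (-τ) * τ⁻¹ * M (2 * π * r / τ)) (Ioi 0))
    (hwM : ∀ s, 0 < s → |w s| ≤ M s) (hr : 0 < r) :
    |subordinatedKernel w r| ≤ subordinatedKernel M r :=
  norm_integral_le_of_norm_le hM <| (ae_restrict_iff' measurableSet_Ioi).2 <|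
    Eventually.of_forall fun _ hτ => abs_kernelIntegrand_le hwM hr hτ

lemma aestronglyMeasurable_subordinatedKernel {w : ℝ → ℝ} (hw : Measurable w) :
    AEStronglyMeasurable (subordinatedKernel w) (volume.restrict (Ioi 0)) := by
  have : Measurable fun q : ℝ × ℝ => exp (-q.2) * q.2⁻¹ * w (2 * π * q.1 / q.2) := by fun_prop
  exact (this.stronglyMeasurable.integral_prod_right'
    (ν := volume.restrict (Ioi 0))).aestronglyMeasurable

variable {ι : Type*} {l : Filter ι} [l.IsCountablyGenerated] {w : ι → ℝ → ℝ} {w₀ M : ℝ → ℝ}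

theorem tendsto_subordinatedKernel
    (hM : IntegrableOn (fun τ => exp (-τ) * τ⁻¹ * M (2 * π * r / τ)) (Ioi 0))
    (hw : ∀ᶠ i in l, Measurable (w i)) (hwM : ∀ᶠ i in l, ∀ s, 0 < s → |w i s| ≤ M s)
    (hlim : ∀ s, 0 < s → Tendsto (fun i => w i s) l (𝓝 (w₀ s))) (hr : 0 < r) :
    Tendsto (fun i => subordinatedKernel (w i) r) l (𝓝 (subordinatedKernel w₀ r)) := by
  refine tendsto_integral_filter_of_dominated_convergence _ ?_ ?_ hM ?_
  · filter_upwards [hw] with i hi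
    exact Measurable.aestronglyMeasurable (by fun_prop)
  · filter_upwards [hwM] with i hi
    exact (ae_restrict_iff' measurableSet_Ioi).2 <| Eventually.of_forall fun _ hτ =>
      abs_kernelIntegrand_le hi hr hτ
  · exact (ae_restrict_iff' measurableSet_Ioi).2 <| Eventually.of_forall fun τ (hτ : 0 < τ) =>
      (hlim _ (by positivity)).const_mul _

theorem tendsto_levyExponent
    (hM : ∀ r, 0 < r → IntegrableOn (fun τ => exp (-τ) * τ⁻¹ * M (2 * π * r / τ)) (Ioi 0))
    (hKM : IntegrableOn (fun r => min 1 (r ^ 2) * subordinatedKernel M r) (Ioi 0))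
    (hw : ∀ᶠ i in l, Measurable (w i)) (hwM : ∀ᶠ i in l, ∀ s, 0 < s → |w i s| ≤ M s)
    (hlim : ∀ s, 0 < s → Tendsto (fun i => w i s) l (𝓝 (w₀ s))) (p : ℝ) :
    Tendsto (fun i => levyExponent (w i) p) l (𝓝 (levyExponent w₀ p)) := by
  refine Tendsto.const_mul 2 <| tendsto_integral_filter_of_dominated_convergence
    (fun r => 2 * (1 + p ^ 2) * (min 1 (r ^ 2) * subordinatedKernel M r)) ?_ ?_
    (hKM.const_mul _) ?_
  · filter_upwards [hw] with i hi
    exact (Measurable.aestronglyMeasurable (by fun_prop)).mul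
      (aestronglyMeasurable_subordinatedKernel hi)
  · filter_upwards [hwM] with i hi
    refine (ae_restrict_iff' measurableSet_Ioi).2 <| Eventually.of_forall fun r (hr : 0 < r) => ?_
    rw [norm_mul, ← mul_assoc]
    exact mul_le_mul (abs_cos_mul_sub_one_le p r) (abs_subordinatedKernel_le (hM r hr) hi hr)
      (abs_nonneg _) (by positivity)
  · exact (ae_restrict_iff' measurableSet_Ioi).2 <| Eventually.of_forall fun r hr =>
      (tendsto_subordinatedKernel (hM r hr) hw hwM hlim hr).const_mul _

end DominatedConvergence

section PowerLaw

variable {r β β₁ β₂ : ℝ}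

lemma integrableOn_kernel_rpow (c : ℝ) (hβ : 0 < β) (hr : 0 < r) :
    IntegrableOn (fun τ => exp (-τ) * τ⁻¹ * (c * (2 * π * r / τ) ^ (-β))) (Ioi 0) := by
  refine IntegrableOn.congr_fun ((GammaIntegral_convergent hβ).const_mul (c * (2 * π * r) ^ (-β)))
    (fun τ (hτ : 0 < τ) => ?_) measurableSet_Ioi
  have := exp_neg_mul_inv_mul_div_rpow β (by positivity : 0 < 2 * π * r) hτ
  linear_combination (-c) * this

lemma subordinatedKernel_rpow (c : ℝ) (hβ : 0 < β) (hr : 0 < r) :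
    subordinatedKernel (fun s => c * s ^ (-β)) r = c * Gamma β * (2 * π * r) ^ (-β) := by
  have h : EqOn (fun τ => exp (-τ) * τ⁻¹ * (c * (2 * π * r / τ) ^ (-β)))
      (fun τ => c * (2 * π * r) ^ (-β) * (exp (-τ) * τ ^ (β - 1))) (Ioi 0) :=
      fun τ (hτ : 0 < τ) => by
    have := exp_neg_mul_inv_mul_div_rpow β (by positivity : 0 < 2 * π * r) hτ
    linear_combination c * this
  rw [subordinatedKernel, setIntegral_congr_fun measurableSet_Ioi h, integral_const_mul,
    ← Gamma_eq_integral hβ]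
  ring

lemma integrableOn_kernel_rpow_add_rpow (c₁ c₂ : ℝ) (hβ₁ : 0 < β₁) (hβ₂ : 0 < β₂) (hr : 0 < r) :
    IntegrableOn (fun τ => exp (-τ) * τ⁻¹ *
      (c₁ * (2 * π * r / τ) ^ (-β₁) + c₂ * (2 * π * r / τ) ^ (-β₂))) (Ioi 0) := by
  exact ((integrableOn_kernel_rpow c₁ hβ₁ hr).add (integrableOn_kernel_rpow c₂ hβ₂ hr)).congr_fun
    (fun _ _ => (mul_add _ _ _).symm) measurableSet_Ioi

lemma subordinatedKernel_rpow_add_rpow (c₁ c₂ : ℝ) (hβ₁ : 0 < β₁) (hβ₂ : 0 < β₂) (hr : 0 < r) :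
    subordinatedKernel (fun s => c₁ * s ^ (-β₁) + c₂ * s ^ (-β₂)) r =
      c₁ * Gamma β₁ * (2 * π * r) ^ (-β₁) + c₂ * Gamma β₂ * (2 * π * r) ^ (-β₂) := by
  rw [← subordinatedKernel_rpow c₁ hβ₁ hr, ← subordinatedKernel_rpow c₂ hβ₂ hr,
    subordinatedKernel, subordinatedKernel, subordinatedKernel, ← integral_add
    (integrableOn_kernel_rpow c₁ hβ₁ hr) (integrableOn_kernel_rpow c₂ hβ₂ hr)]
  simp only [mul_add]

lemma integrableOn_min_one_sq_mul_subordinatedKernel_rpow_add_rpow (c₁ c₂ : ℝ)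
    (hβ₁ : β₁ ∈ Ioo 1 3) (hβ₂ : β₂ ∈ Ioo 1 3) :
    IntegrableOn (fun r => min 1 (r ^ 2) *
      subordinatedKernel (fun s => c₁ * s ^ (-β₁) + c₂ * s ^ (-β₂)) r) (Ioi 0) := by
  refine IntegrableOn.congr_fun
    (((integrableOn_min_one_sq_mul_rpow hβ₁).const_mul (c₁ * Gamma β₁ * (2 * π) ^ (-β₁))).add
      ((integrableOn_min_one_sq_mul_rpow hβ₂).const_mul (c₂ * Gamma β₂ * (2 * π) ^ (-β₂))))
    (fun r (hr : 0 < r) => ?_) measurableSet_Ioi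
  rw [Pi.add_apply,
    subordinatedKernel_rpow_add_rpow c₁ c₂ (by linarith [hβ₁.1]) (by linarith [hβ₂.1]) hr,
    mul_rpow (by positivity) hr.le, mul_rpow (by positivity) hr.le]
  ring

noncomputable def oneSubCosIntegral (β : ℝ) : ℝ := ∫ u in Ioi 0, (1 - cos u) * u ^ (-β)

lemma integrableOn_one_sub_cos_mul_rpow (hβ : β ∈ Ioo 1 3) :
    IntegrableOn (fun u => (1 - cos u) * u ^ (-β)) (Ioi 0) := by
  refine Integrable.mono' ((integrableOn_min_one_sq_mul_rpow hβ).const_mul 4)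
    (by fun_prop : Measurable fun u : ℝ => (1 - cos u) * u ^ (-β)).aestronglyMeasurable
    ((ae_restrict_iff' measurableSet_Ioi).2 <| Eventually.of_forall fun u (hu : 0 < u) => ?_)
  have h := abs_cos_mul_sub_one_le 1 u
  rw [one_mul, abs_sub_comm] at h
  rw [norm_mul, Real.norm_eq_abs, Real.norm_of_nonneg (rpow_nonneg hu.le _), ← mul_assoc]
  exact mul_le_mul_of_nonneg_right (by linarith) (rpow_nonneg hu.le _)

lemma oneSubCosIntegral_pos (hβ : β ∈ Ioo 1 3) : 0 < oneSubCosIntegral β := by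
  have hnonneg : ∀ u, 0 < u → 0 ≤ (1 - cos u) * u ^ (-β) := fun u hu =>
    mul_nonneg (by linarith [cos_le_one u]) (rpow_nonneg hu.le _)
  rw [oneSubCosIntegral, setIntegral_pos_iff_support_of_nonneg_ae
    ((ae_restrict_iff' measurableSet_Ioi).2 (Eventually.of_forall hnonneg))
    (integrableOn_one_sub_cos_mul_rpow hβ)]
  -- on `(π/2, 3π/2)` the cosine is negative
  refine lt_of_lt_of_le ?_ (measure_mono (s := Ioo (π / 2) (π + π / 2)) fun u hu => ?_)
  · rw [Real.volume_Ioo, ENNReal.ofReal_pos]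
    linarith [pi_pos]
  · have hu₀ : 0 < u := by linarith [hu.1, pi_pos]
    have hcos := cos_neg_of_pi_div_two_lt_of_lt hu.1 hu.2
    exact ⟨(mul_pos (by linarith) (rpow_pos_of_pos hu₀ _)).ne', hu₀⟩

lemma integral_one_sub_cos_mul_mul_rpow (hβ : β ≠ 1) {q : ℝ} (hq : 0 ≤ q) :
    ∫ r in Ioi 0, (1 - cos (q * r)) * r ^ (-β) = q ^ (β - 1) * oneSubCosIntegral β := by
  rcases hq.eq_or_lt with rfl | hq
  · simp [zero_rpow (sub_ne_zero.2 hβ)]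
  have h : EqOn (fun r => (1 - cos (q * r)) * r ^ (-β))
      (fun r => q ^ β * ((1 - cos (q * r)) * (q * r) ^ (-β))) (Ioi 0) := fun r (hr : 0 < r) => by
    beta_reduce
    rw [mul_rpow hq.le hr.le, rpow_neg hq.le]
    field_simp
  rw [setIntegral_congr_fun measurableSet_Ioi h, integral_const_mul,
    integral_comp_mul_left_Ioi (fun u => (1 - cos u) * u ^ (-β)) 0 hq, mul_zero, smul_eq_mul,
    rpow_sub_one hq.ne', oneSubCosIntegral]
  ring

theorem levyExponent_rpow (hβ : β ∈ Ioo 1 3) (c p : ℝ) :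
    levyExponent (fun s => c * s ^ (-β)) p =
      -(2 * c * Gamma β * (2 * π) ^ (-β) * oneSubCosIntegral β) * |p| ^ (β - 1) := by
  have h : EqOn (fun r => (cos (p * r) - 1) * subordinatedKernel (fun s => c * s ^ (-β)) r)
      (fun r => -(c * Gamma β * (2 * π) ^ (-β)) * ((1 - cos (|p| * r)) * r ^ (-β))) (Ioi 0) :=
    fun r (hr : 0 < r) => by
      beta_reduce
      rw [subordinatedKernel_rpow c (by linarith [hβ.1]) hr, mul_rpow (by positivity) hr.le,
        ← abs_of_pos hr, ← abs_mul, cos_abs, abs_of_pos hr]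
      ring
  rw [levyExponent, setIntegral_congr_fun measurableSet_Ioi h, integral_const_mul,
    integral_one_sub_cos_mul_mul_rpow (by linarith [hβ.1]) (abs_nonneg p)]
  ring

end PowerLaw

section Dispersion

variable {B ε t a : ℝ}

noncomputable def radical (B t : ℝ) : ℝ := √(t ^ 2 + B ^ 2 / 4)

lemma radical_pos (hB : 0 < B) (t : ℝ) : 0 < radical B t := sqrt_pos.2 (by positivity)

lemma abs_le_radical (B t : ℝ) : |t| ≤ radical B t := by
  rw [radical, ← sqrt_sq_eq_abs]
  exact sqrt_le_sqrt (le_add_of_nonneg_right (by positivity))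

lemma half_le_radical (hB : 0 ≤ B) (t : ℝ) : B / 2 ≤ radical B t := by
  rw [radical, ← sqrt_sq (by positivity : 0 ≤ B / 2)]
  exact sqrt_le_sqrt (by nlinarith [sq_nonneg t])

lemma half_lt_radical (hB : 0 ≤ B) (ht : t ≠ 0) : B / 2 < radical B t := by
  rw [radical, ← sqrt_sq (by positivity : 0 ≤ B / 2)]
  exact sqrt_lt_sqrt (by positivity) (by nlinarith [sq_pos_of_ne_zero ht])

lemma radical_le (hB : 0 ≤ B) (ht : 0 ≤ t) : radical B t ≤ t + B / 2 := by
  rw [radical, sqrt_le_left (by positivity)]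
  nlinarith

lemma radical_neg (B t : ℝ) : radical B (-t) = radical B t := by
  simp [radical]

@[fun_prop]
lemma continuous_radical (B : ℝ) : Continuous (radical B) := by
  unfold radical; fun_prop

lemma hasDerivAt_radical (hB : 0 < B) (t : ℝ) : HasDerivAt (radical B) (t / radical B t) t := by
  have h := ((hasDerivAt_pow 2 t).add_const (B ^ 2 / 4)).sqrt (by positivity)
  refine h.congr_deriv ?_
  rw [show √(t ^ 2 + B ^ 2 / 4) = radical B t from rfl]
  field_simp [(radical_pos hB t).ne']
  norm_num

lemma abs_mul_le_of_abs_le_one (hB : 0 ≤ B) (hε : |ε| ≤ 1) : |ε * B| ≤ B := by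
  rw [abs_mul, abs_of_nonneg hB]
  exact mul_le_of_le_one_left hB hε

noncomputable def dispersion (B ε t : ℝ) : ℝ := (2 * radical B t + ε * B) * t

noncomputable def dispersionDeriv (B ε t : ℝ) : ℝ :=
  2 * radical B t + ε * B + 2 * t ^ 2 / radical B t

lemma two_mul_radical_add_nonneg (hB : 0 ≤ B) (hε : |ε| ≤ 1) (t : ℝ) :
    0 ≤ 2 * radical B t + ε * B := by
  linarith [half_le_radical hB t, (abs_le.1 (abs_mul_le_of_abs_le_one hB hε)).1]

lemma two_mul_radical_add_pos (hB : 0 ≤ B) (hε : |ε| ≤ 1) (ht : t ≠ 0) :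
    0 < 2 * radical B t + ε * B := by
  linarith [half_lt_radical hB ht, (abs_le.1 (abs_mul_le_of_abs_le_one hB hε)).1]

lemma hasDerivAt_dispersion (hB : 0 < B) (ε t : ℝ) :
    HasDerivAt (dispersion B ε) (dispersionDeriv B ε t) t := by
  have h := (((hasDerivAt_radical hB t).const_mul 2).add_const (ε * B)).mul (hasDerivAt_id' t)
  refine h.congr_deriv ?_
  rw [dispersionDeriv]
  field_simp [(radical_pos hB t).ne']
  ring

lemma dispersionDeriv_pos (hB : 0 < B) (hε : |ε| ≤ 1) (ht : t ≠ 0) : 0 < dispersionDeriv B ε t := by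
  have := two_mul_radical_add_nonneg hB.le hε t
  have := radical_pos hB t
  rw [dispersionDeriv]
  positivity

lemma continuous_dispersion (B ε : ℝ) : Continuous (dispersion B ε) := by
  unfold dispersion; fun_prop

lemma continuous_dispersionDeriv (hB : 0 < B) (ε : ℝ) : Continuous (dispersionDeriv B ε) :=
  (by fun_prop : Continuous fun t => 2 * radical B t + ε * B).add <|
    (by fun_prop : Continuous fun t : ℝ => 2 * t ^ 2).div (continuous_radical B)
      fun t => (radical_pos hB t).ne'

lemma dispersion_zero : dispersion B ε 0 = 0 := mul_zero _

lemma dispersion_neg (t : ℝ) : dispersion B ε (-t) = -dispersion B ε t := by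
  rw [dispersion, dispersion, radical_neg, mul_neg]

lemma strictMono_dispersion (hB : 0 ≤ B) (hε : |ε| ≤ 1) : StrictMono (dispersion B ε) := by
  refine strictMono_of_odd_strictMonoOn_nonneg dispersion_neg fun u (hu : 0 ≤ u) v _ huv => ?_
  have hρ : radical B u ≤ radical B v := sqrt_le_sqrt (by nlinarith)
  calc dispersion B ε u ≤ (2 * radical B v + ε * B) * u := by
        unfold dispersion; gcongr
    _ < dispersion B ε v :=
        mul_lt_mul_of_pos_left huv (two_mul_radical_add_pos hB hε (hu.trans_lt huv).ne')

lemma tendsto_dispersion_atTop (hB : 0 ≤ B) (hε : |ε| ≤ 1) :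
    Tendsto (dispersion B ε) atTop atTop := by
  refine tendsto_atTop_mono' _ ?_ tendsto_id
  filter_upwards [eventually_ge_atTop ((B + 1) / 2)] with t ht
  have h₁ := (abs_le.1 (abs_mul_le_of_abs_le_one hB hε)).1
  have h₂ : t ≤ radical B t := (le_abs_self t).trans (abs_le_radical B t)
  change t ≤ (2 * radical B t + ε * B) * t
  nlinarith

lemma surjective_dispersion (hB : 0 ≤ B) (hε : |ε| ≤ 1) : Function.Surjective (dispersion B ε) := by
  have htop := tendsto_dispersion_atTop hB hε
  refine (continuous_dispersion B ε).surjective htop ?_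
  have : dispersion B ε = fun t => -dispersion B ε (-t) := by
    funext t; rw [dispersion_neg, neg_neg]
  rw [this]
  exact tendsto_neg_atTop_atBot.comp (htop.comp tendsto_neg_atBot_atTop)

noncomputable def dispersionInv (B ε : ℝ) : ℝ → ℝ := Function.invFun (dispersion B ε)

lemma dispersion_dispersionInv (hB : 0 ≤ B) (hε : |ε| ≤ 1) (a : ℝ) :
    dispersion B ε (dispersionInv B ε a) = a :=
  Function.invFun_eq (surjective_dispersion hB hε a)

lemma dispersionInv_eq_of_dispersion_eq (hB : 0 ≤ B) (hε : |ε| ≤ 1) (h : dispersion B ε t = a) :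
    dispersionInv B ε a = t := by
  rw [← h]
  exact Function.leftInverse_invFun (strictMono_dispersion hB hε).injective t

lemma dispersionInv_pos (hB : 0 ≤ B) (hε : |ε| ≤ 1) (ha : 0 < a) : 0 < dispersionInv B ε a := by
  rwa [← (strictMono_dispersion hB hε).lt_iff_lt, dispersion_zero, dispersion_dispersionInv hB hε]

lemma dispersionInv_ne_zero (hB : 0 ≤ B) (hε : |ε| ≤ 1) (ha : a ≠ 0) : dispersionInv B ε a ≠ 0 := by
  intro h
  rw [← dispersion_dispersionInv hB hε a, h, dispersion_zero] at ha
  exact ha rfl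

lemma continuous_dispersionInv (hB : 0 ≤ B) (hε : |ε| ≤ 1) : Continuous (dispersionInv B ε) := by
  refine Monotone.continuous_of_surjective (fun a b hab => ?_)
    fun t => ⟨_, dispersionInv_eq_of_dispersion_eq hB hε rfl⟩
  rwa [← (strictMono_dispersion hB hε).le_iff_le, dispersion_dispersionInv hB hε,
    dispersion_dispersionInv hB hε]

lemma hasDerivAt_dispersionInv (hB : 0 < B) (hε : |ε| ≤ 1) (ha : a ≠ 0) :
    HasDerivAt (dispersionInv B ε) (dispersionDeriv B ε (dispersionInv B ε a))⁻¹ a :=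
  HasDerivAt.of_local_left_inverse (continuous_dispersionInv hB.le hε).continuousAt
    (hasDerivAt_dispersion hB ε _)
    (dispersionDeriv_pos hB hε (dispersionInv_ne_zero hB.le hε ha)).ne'
    (Eventually.of_forall (dispersion_dispersionInv hB.le hε))

/-- The integrand of `h_{B,ε}`. -/
noncomputable def density (B ε t : ℝ) : ℝ := (1 / 2 + ε * B / (4 * radical B t)) * t ^ 2

lemma continuous_density (hB : 0 < B) (ε : ℝ) : Continuous (density B ε) :=
  ((continuous_const.div (by fun_prop) fun t => by
    have := radical_pos hB t; positivity).const_add _).mul (continuous_pow 2)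

lemma density_nonneg_and_le (hB : 0 < B) (hε : |ε| ≤ 1) (t : ℝ) :
    0 ≤ density B ε t ∧ density B ε t ≤ t ^ 2 := by
  have hρ : 0 < 4 * radical B t := by linarith [radical_pos hB t]
  have hεB := abs_le.1 ((abs_mul_le_of_abs_le_one hB.le hε).trans
    (by linarith [half_le_radical hB.le t] : B ≤ 2 * radical B t))
  have h₁ : -(1 / 2) ≤ ε * B / (4 * radical B t) := by rw [le_div_iff₀ hρ]; linarith
  have h₂ : ε * B / (4 * radical B t) ≤ 1 / 2 := by rw [div_le_iff₀ hρ]; linarith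
  constructor <;> unfold density <;> nlinarith [sq_nonneg t]

lemma le_sqrt_add_of_dispersion_eq (hB : 0 ≤ B) (hε : |ε| ≤ 1) {y : ℝ} (hy : 0 < y)
    (h : dispersion B ε y = a) : y ≤ √a + B := by
  rcases lt_or_ge y B with hyB | hyB
  · linarith [sqrt_nonneg a]
  have hεB := (abs_le.1 (abs_mul_le_of_abs_le_one hB hε)).1
  have hρ : y ≤ radical B y := (le_abs_self y).trans (abs_le_radical B y)
  have hya : y ^ 2 ≤ a := by rw [← h]; unfold dispersion; nlinarith
  linarith [(le_abs_self y).trans (abs_le_sqrt hya)]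

lemma abs_two_mul_sq_sub_le (hB : 0 ≤ B) (hε : |ε| ≤ 1) {y : ℝ} (hy : 0 < y)
    (h : dispersion B ε y = a) : |2 * y ^ 2 - a| ≤ 2 * B * y := by
  have hεB := abs_le.1 (abs_mul_le_of_abs_le_one hB hε)
  have h₁ : y ≤ radical B y := (le_abs_self y).trans (abs_le_radical B y)
  have h₂ := radical_le hB hy.le
  rw [← h, abs_le]
  unfold dispersion
  constructor <;> nlinarith

lemma density_div_dispersionDeriv_le (hB : 0 < B) (hε : |ε| ≤ 1) {y : ℝ} (hy : 0 < y)
    (h : dispersion B ε y = a) : density B ε y / dispersionDeriv B ε y ≤ (√a + 2 * B) / 2 := by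
  have hρ := radical_pos hB y
  have hderiv : 2 * y ^ 2 / radical B y ≤ dispersionDeriv B ε y := by
    unfold dispersionDeriv; linarith [two_mul_radical_add_nonneg hB.le hε y]
  calc density B ε y / dispersionDeriv B ε y ≤ y ^ 2 / (2 * y ^ 2 / radical B y) :=
        div_le_div₀ (by positivity) (density_nonneg_and_le hB hε y).2 (by positivity) hderiv
    _ = radical B y / 2 := by field_simp
    _ ≤ (√a + 2 * B) / 2 := by
        linarith [radical_le hB.le hy.le, le_sqrt_add_of_dispersion_eq hB.le hε hy h]

lemma tendsto_sq_of_dispersion_eq {y : ℝ → ℝ} (hε : |ε| ≤ 1) (hy : ∀ B, 0 < B → 0 < y B)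
    (h : ∀ B, 0 < B → dispersion B ε (y B) = a) :
    Tendsto (fun B => y B ^ 2) (𝓝[>] 0) (𝓝 (a / 2)) := by
  have hbound : Tendsto (fun B : ℝ => B * (√a + B)) (𝓝[>] 0) (𝓝 0) := by
    have : Tendsto (fun B : ℝ => B * (√a + B)) (𝓝 0) (𝓝 (0 * (√a + 0))) :=
      tendsto_id.mul (tendsto_const_nhds.add tendsto_id)
    simpa using this.mono_left nhdsWithin_le_nhds
  rw [tendsto_iff_norm_sub_tendsto_zero]
  refine squeeze_zero' (Eventually.of_forall fun _ => norm_nonneg _) ?_ hbound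
  filter_upwards [self_mem_nhdsWithin] with B (hB : 0 < B)
  have h₁ := abs_two_mul_sq_sub_le hB.le hε (hy B hB) (h B hB)
  have h₂ := le_sqrt_add_of_dispersion_eq hB.le hε (hy B hB) (h B hB)
  calc ‖y B ^ 2 - a / 2‖ = |2 * y B ^ 2 - a| / 2 := by
        rw [Real.norm_eq_abs, ← abs_two, ← abs_div]; ring_nf
    _ ≤ B * (√a + B) := by
        rw [div_le_iff₀ two_pos]; nlinarith

theorem tendsto_density_div_dispersionDeriv {y : ℝ → ℝ} (hε : |ε| ≤ 1) (ha : 0 < a)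
    (hy : ∀ B, 0 < B → 0 < y B) (h : ∀ B, 0 < B → dispersion B ε (y B) = a) :
    Tendsto (fun B => density B ε (y B) / dispersionDeriv B ε (y B)) (𝓝[>] 0)
      (𝓝 (√(a / 2) / 8)) := by
  set m := √(a / 2)
  have hm : 0 < m := sqrt_pos.2 (by positivity)
  have hm2 : m ^ 2 = a / 2 := sq_sqrt (by positivity)
  have hB : Tendsto (fun B : ℝ => B) (𝓝[>] 0) (𝓝 0) := nhdsWithin_le_nhds
  have hy2 := tendsto_sq_of_dispersion_eq hε hy h
  have hρ : Tendsto (fun B => radical B (y B)) (𝓝[>] 0) (𝓝 m) := by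
    have := (hy2.add ((hB.pow 2).div_const 4)).sqrt
    rwa [zero_pow two_ne_zero, zero_div, add_zero] at this
  have hnum := (((hB.const_mul ε).div (hρ.const_mul 4) (by positivity)).const_add (1 / 2)).mul hy2
  have hden := ((hρ.const_mul 2).add (hB.const_mul ε)).add ((hy2.const_mul 2).div hρ hm.ne')
  have hlim := hnum.div hden (by rw [mul_zero, add_zero]; positivity)
  rwa [show (1 / 2 + ε * 0 / (4 * m)) * (a / 2) / (2 * m + ε * 0 + 2 * (a / 2) / m) = m / 8 by
    rw [← hm2]; field_simp; ring] at hlim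

end Dispersion

section PaperKernel

variable {γ B ε s : ℝ}

/-- The paper's `x_{B,ε}(r)`. -/
noncomputable def xB (γ B ε r : ℝ) : ℝ := dispersionInv B ε (π / (γ * r))

/-- The paper's `g_{B,ε}(r)` for `r > 0`, see `eq_gB`. -/
noncomputable def gB (γ B ε r : ℝ) : ℝ :=
  density B ε (xB γ B ε r) / (4 * γ * r ^ 2 * dispersionDeriv B ε (xB γ B ε r))

lemma dispersion_xB (hB : 0 ≤ B) (hε : |ε| ≤ 1) (γ s : ℝ) :
    dispersion B ε (xB γ B ε s) = π / (γ * s) :=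
  dispersion_dispersionInv hB hε _

lemma xB_pos (hγ : 0 < γ) (hB : 0 ≤ B) (hε : |ε| ≤ 1) (hs : 0 < s) : 0 < xB γ B ε s :=
  dispersionInv_pos hB hε (by positivity)

lemma hasDerivAt_xB (hγ : 0 < γ) (hB : 0 < B) (hε : |ε| ≤ 1) (hs : 0 < s) :
    HasDerivAt (xB γ B ε) ((dispersionDeriv B ε (xB γ B ε s))⁻¹ * -(π / (γ * s ^ 2))) s := by
  have hA : HasDerivAt (fun r => π / (γ * r)) (-(π / (γ * s ^ 2))) s :=
    (((hasDerivAt_inv hs.ne').const_mul (π / γ)).congr_deriv (by ring)).congr_of_eventuallyEq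
      (Eventually.of_forall fun r => by ring)
  exact (hasDerivAt_dispersionInv hB hε (by positivity)).comp s hA

lemma hasDerivAt_integral_density_xB (hγ : 0 < γ) (hB : 0 < B) (hε : |ε| ≤ 1) (hs : 0 < s) :
    HasDerivAt (fun r => 1 / (4 * π) * ∫ t in (0 : ℝ)..xB γ B ε r, density B ε t)
      (-gB γ B ε s) s := by
  have h := (((continuous_density hB ε).integral_hasStrictDerivAt 0 _).hasDerivAt.comp s
    (hasDerivAt_xB hγ hB hε hs)).const_mul (1 / (4 * π))
  refine h.congr_deriv ?_
  have := (dispersionDeriv_pos hB hε (xB_pos hγ hB.le hε hs).ne').ne'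
  rw [gB]
  field_simp

theorem eq_gB {x h g : ℝ → ℝ} (hγ : 0 < γ) (hB : 0 < B) (hε : |ε| ≤ 1)
    (hx : ∀ r, r ≠ 0 → dispersion B ε (x r) = π / (γ * r))
    (hh : ∀ r, r ≠ 0 → h r = 1 / (4 * π) *
      (if 0 < r then ∫ t in (0 : ℝ)..x r, density B ε t else ∫ t in x r..0, density B ε t))
    (hg : ∀ r, r ≠ 0 → g r = if 0 < r then -deriv h r else deriv h r) (hs : 0 < s) :
    g s = gB γ B ε s := by
  have hh' : h =ᶠ[𝓝 s] fun r => 1 / (4 * π) * ∫ t in (0 : ℝ)..xB γ B ε r, density B ε t := by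
    filter_upwards [Ioi_mem_nhds hs] with r (hr : 0 < r)
    rw [hh r hr.ne', if_pos hr, ← dispersionInv_eq_of_dispersion_eq hB.le hε (hx r hr.ne')]
    rfl
  rw [hg s hs.ne', if_pos hs, hh'.deriv_eq, (hasDerivAt_integral_density_xB hγ hB hε hs).deriv,
    neg_neg]

lemma gB_eq_div (γ B ε s : ℝ) : gB γ B ε s =
    density B ε (xB γ B ε s) / dispersionDeriv B ε (xB γ B ε s) / (4 * γ * s ^ 2) := by
  rw [gB, div_div, mul_comm (dispersionDeriv _ _ _)]

lemma measurable_gB (hB : 0 < B) (hε : |ε| ≤ 1) (γ : ℝ) : Measurable (gB γ B ε) := by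
  have := (continuous_density hB ε).measurable
  have := (continuous_dispersionDeriv hB ε).measurable
  have := (continuous_dispersionInv hB.le hε).measurable
  unfold gB xB
  fun_prop

lemma gB_nonneg (hγ : 0 < γ) (hB : 0 < B) (hε : |ε| ≤ 1) (hs : 0 < s) : 0 ≤ gB γ B ε s := by
  have := (density_nonneg_and_le hB hε (xB γ B ε s)).1
  have := dispersionDeriv_pos hB hε (xB_pos hγ hB.le hε hs).ne'
  unfold gB
  positivity

lemma gB_le (hγ : 0 < γ) (hB : 0 < B) (hε : |ε| ≤ 1) (hs : 0 < s) :
    gB γ B ε s ≤ √(π / γ) / (8 * γ) * s ^ (-(5 / 2) : ℝ) + B / (4 * γ) * s ^ (-2 : ℝ) := by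
  have h := density_div_dispersionDeriv_le hB hε (xB_pos hγ hB.le hε hs)
    (dispersion_xB hB.le hε γ s)
  rw [gB_eq_div]
  calc _ ≤ (√(π / (γ * s)) + 2 * B) / 2 / (4 * γ * s ^ 2) := by gcongr
    _ = _ := by
      rw [show (-(5 / 2) : ℝ) = -((2 : ℕ) + 1 / 2) by norm_num, rpow_neg_nat_add_half hs,
        rpow_neg hs.le, rpow_two, show π / (γ * s) = π / γ / s by ring, sqrt_div' _ hs.le]
      have := sqrt_pos.2 hs
      field_simp
      ring

lemma tendsto_gB (hγ : 0 < γ) (hε : |ε| ≤ 1) (hs : 0 < s) :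
    Tendsto (fun B => gB γ B ε s) (𝓝[>] 0)
      (𝓝 (√(π / (2 * γ)) / (32 * γ) * s ^ (-(5 / 2) : ℝ))) := by
  have h := (tendsto_density_div_dispersionDeriv hε (by positivity : 0 < π / (γ * s))
    (fun B hB => xB_pos hγ hB.le hε hs) (fun B hB => dispersion_xB hB.le hε γ s)).div_const
    (4 * γ * s ^ 2)
  simp only [← gB_eq_div] at h
  convert h using 2
  rw [show (-(5 / 2) : ℝ) = -((2 : ℕ) + 1 / 2) by norm_num, rpow_neg_nat_add_half hs,
    show π / (γ * s) / 2 = π / (2 * γ) / s by ring, sqrt_div' _ hs.le]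
  have := sqrt_pos.2 hs
  field_simp
  ring

theorem tendsto_levyExponent_gB (hγ : 0 < γ) (p : ℝ) :
    Tendsto (fun B => levyExponent (fun s => gB γ B 1 s + gB γ B (-1) s) p) (𝓝[>] 0)
      (𝓝 (levyExponent (fun s => √(π / (2 * γ)) / (16 * γ) * s ^ (-(5 / 2) : ℝ)) p)) := by
  have h₁ : |(1 : ℝ)| ≤ 1 := by norm_num
  have h₂ : |(-1 : ℝ)| ≤ 1 := by norm_num
  refine tendsto_levyExponent
    (M := fun s => √(π / γ) / (4 * γ) * s ^ (-(5 / 2) : ℝ) + 1 / (2 * γ) * s ^ (-2 : ℝ))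
    (fun r hr => integrableOn_kernel_rpow_add_rpow _ _ (by norm_num) (by norm_num) hr)
    (integrableOn_min_one_sq_mul_subordinatedKernel_rpow_add_rpow _ _
      ⟨by norm_num, by norm_num⟩ ⟨by norm_num, by norm_num⟩) ?_ ?_ (fun s hs => ?_) p
  · filter_upwards [self_mem_nhdsWithin] with B (hB : 0 < B)
    exact (measurable_gB hB h₁ γ).add (measurable_gB hB h₂ γ)
  · filter_upwards [Ioc_mem_nhdsGT zero_lt_one] with B hB s hs
    rw [abs_of_nonneg (add_nonneg (gB_nonneg hγ hB.1 h₁ hs) (gB_nonneg hγ hB.1 h₂ hs))]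
    have hB₁ : B / (4 * γ) * s ^ (-2 : ℝ) ≤ 1 / (4 * γ) * s ^ (-2 : ℝ) := by
      gcongr; exact hB.2
    calc _ ≤ 2 * (√(π / γ) / (8 * γ) * s ^ (-(5 / 2) : ℝ) + 1 / (4 * γ) * s ^ (-2 : ℝ)) := by
          linarith [gB_le hγ hB.1 h₁ hs, gB_le hγ hB.1 h₂ hs]
      _ = _ := by ring
  · convert (tendsto_gB hγ h₁ hs).add (tendsto_gB hγ h₂ hs) using 2
    ring

end PaperKernel

noncomputable def levyConstant : ℝ := Gamma (5 / 2) * oneSubCosIntegral (5 / 2) / (64 * π ^ 2)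

lemma levyConstant_pos : 0 < levyConstant := by
  have := Gamma_pos_of_pos (by norm_num : (0 : ℝ) < 5 / 2)
  have := oneSubCosIntegral_pos (β := 5 / 2) ⟨by norm_num, by norm_num⟩
  unfold levyConstant
  positivity

lemma levyExponent_smallFieldLimit {γ : ℝ} (hγ : 0 < γ) (p : ℝ) :
    levyExponent (fun s => √(π / (2 * γ)) / (16 * γ) * s ^ (-(5 / 2) : ℝ)) p =
      -levyConstant * γ ^ (-(3 / 2) : ℝ) * |p| ^ ((3 : ℝ) / 2) := by
  rw [levyExponent_rpow ⟨by norm_num, by norm_num⟩, show (5 / 2 : ℝ) - 1 = 3 / 2 by norm_num,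
    levyConstant, show (-(5 / 2) : ℝ) = -((2 : ℕ) + 1 / 2) by norm_num,
    show (-(3 / 2) : ℝ) = -((1 : ℕ) + 1 / 2) by norm_num, rpow_neg_nat_add_half (by positivity),
    rpow_neg_nat_add_half hγ, sqrt_div' _ (by positivity), sqrt_mul zero_le_two,
    sqrt_mul zero_le_two]
  have := sqrt_pos.2 hγ
  have := sqrt_pos.2 pi_pos
  field_simp
  rw [sq_sqrt zero_le_two]
  ring

end SmallFieldLimit

/-- There is a constant `c₀ > 0`, independent of `γ`, such that for every
`γ > 0` and every `p ∈ ℝ`, `Φ_B(p) → -c₀·γ^(-3/2)·|p|^(3/2)` as `B → 0⁺`.  Here, for each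
`γ > 0`, the families `x_{B,±}`, `h_{B,±}`, `g_{B,±}` and the Lévy exponent `Φ_B` are
characterized by the hypotheses below. -/
theorem stmt_16 :
    ∃ c₀ : ℝ, 0 < c₀ ∧
      ∀ γ : ℝ, 0 < γ →
        ∀ (x h g : ℝ → ℝ → ℝ → ℝ) (Φ : ℝ → ℝ → ℝ),
          (∀ B : ℝ, 0 < B → ∀ ε : ℝ, (ε = 1 ∨ ε = -1) → ∀ r : ℝ, r ≠ 0 →
            (2 * Real.sqrt (x B ε r ^ 2 + B ^ 2 / 4) + ε * B) * x B ε r =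
              Real.pi / (γ * r)) →
          (∀ B : ℝ, 0 < B → ∀ ε : ℝ, (ε = 1 ∨ ε = -1) → ∀ r : ℝ, r ≠ 0 →
            h B ε r = (1 / (4 * Real.pi)) *
              (if 0 < r then
                ∫ t in (0 : ℝ)..(x B ε r),
                  (1 / 2 + ε * B / (4 * Real.sqrt (t ^ 2 + B ^ 2 / 4))) * t ^ 2
               else
                ∫ t in (x B ε r)..(0 : ℝ),
                  (1 / 2 + ε * B / (4 * Real.sqrt (t ^ 2 + B ^ 2 / 4))) * t ^ 2)) →
          (∀ B : ℝ, 0 < B → ∀ ε : ℝ, (ε = 1 ∨ ε = -1) → ∀ r : ℝ, r ≠ 0 →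
            g B ε r = if 0 < r then -(deriv (h B ε) r) else deriv (h B ε) r) →
          (∀ B : ℝ, 0 < B → ∀ p : ℝ,
            Φ B p = 2 * ∫ r in Set.Ioi (0 : ℝ), (Real.cos (p * r) - 1) *
              ∫ τ in Set.Ioi (0 : ℝ), Real.exp (-τ) * τ⁻¹ *
                (g B 1 (2 * Real.pi * r / τ) + g B (-1) (2 * Real.pi * r / τ))) →
          ∀ p : ℝ,
            Tendsto (fun B => Φ B p) (𝓝[>] 0)
              (𝓝 (-c₀ * γ ^ (-(3 / 2) : ℝ) * |p| ^ ((3 : ℝ) / 2))) := by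
  refine ⟨SmallFieldLimit.levyConstant, SmallFieldLimit.levyConstant_pos,
    fun γ hγ x h g Φ hx hh hg hΦ p => ?_⟩
  have hg_eq : ∀ B, 0 < B → ∀ ε, (ε = 1 ∨ ε = -1) → ∀ s, 0 < s →
      g B ε s = SmallFieldLimit.gB γ B ε s := fun B hB ε hε s hs =>
    SmallFieldLimit.eq_gB hγ hB (by rcases hε with rfl | rfl <;> norm_num)
      (hx B hB ε hε) (hh B hB ε hε) (hg B hB ε hε) hs
  rw [← SmallFieldLimit.levyExponent_smallFieldLimit hγ p]
  refine (SmallFieldLimit.tendsto_levyExponent_gB hγ p).congr'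
    (eventually_nhdsWithin_of_forall fun B (hB : 0 < B) =>
      (SmallFieldLimit.levyExponent_congr (w' := fun s => g B 1 s + g B (-1) s)
        (fun s (hs : 0 < s) => ?_) p).trans (hΦ B hB p).symm)
  simp only [hg_eq B hB 1 (Or.inl rfl) s hs, hg_eq B hB (-1) (Or.inr rfl) s hs]
end

section
/- Fix γ > 0. There exist measurable functions f₊, f₋, h₊, h₋ : (0,∞) → [0,∞) such that for almost every r > 0: B^{1/3}·g_{B,+}(r) ≤ f₊(r) and B^{1/3}·g_{B,−}(r) ≤ f₋(r) for all B > 1, and g_{B,+}(r) ≤ h₊(r) and g_{B,−}(r) ≤ h₋(r) for all B ∈ (0,1); moreover ∫_0^1 r²·f_±(r) dr < ∞, ∫_1^∞ f_±(r) dr < ∞, ∫_0^1 r²·h_±(r) dr < ∞ and ∫_1^∞ h_±(r) dr < ∞ for both signs. -/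
open Filter Topology MeasureTheory

/-!
Write `c = π / γ`, `s(t) = √(t² + B²/4)`, `A(t) = 2 s(t) + ε B` and `F(t) = A(t) t`.
For `r > 0`, `x = x_{B,ε}(r)` is the preimage of `c / r` under the strictly increasing map `F`,
whose derivative is `D / s` with `D = A s + 2 x²`. Implicit differentiation of `h_{B,ε}` gives
`g_{B,ε}(r) = c A x² / (16 π r² D)`. Since `D² ≥ 8 A s x² ≥ 8 A x³`, `D ≥ 2 x²`,
`D ≥ A B / 2` and `r A x = c`, this yields `g² r⁵ ≤ c³` and `B g³ r⁸ ≤ c⁵` uniformly in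
`B > 0`, so that `c^{3/2} r^{-5/2}` and `c^{5/3} r^{-8/3}` are dominating functions with the
required integrability.
-/

open Real Set

theorem hasDerivAt_of_injective_of_comp_eventuallyEq {𝕜 : Type*} [NontriviallyNormedField 𝕜]
    [CompleteSpace 𝕜] {f φ q : 𝕜 → 𝕜} {f' q' a : 𝕜} (hf : Function.Injective f)
    (hfd : HasStrictDerivAt f f' (φ a)) (hf' : f' ≠ 0) (hq : HasDerivAt q q' a)
    (hφ : f ∘ φ =ᶠ[𝓝 a] q) : HasDerivAt φ (f'⁻¹ * q') a := by
  -- `φ` need not be continuous: injectivity of `f` identifies it near `a` with `ψ ∘ q`.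
  set ψ := hfd.localInverse f f' (φ a) hf'
  have hqa : f (φ a) = q a := hφ.eq_of_nhds
  have hψ : HasDerivAt ψ f'⁻¹ (q a) := hqa ▸ (hfd.to_localInverse hf').hasDerivAt
  have hfψ : ∀ᶠ u in 𝓝 a, f (ψ (q u)) = q u :=
    hq.continuousAt.tendsto.eventually (hqa ▸ hfd.eventually_right_inverse hf')
  have hφψ : φ =ᶠ[𝓝 a] ψ ∘ q := by
    filter_upwards [hfψ, hφ] with u h₁ h₂
    exact hf (h₂.trans h₁.symm)
  exact (hψ.comp a hq).congr_of_eventuallyEq hφψ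

theorem le_rpow_inv_mul_rpow_of_pow_mul_pow_le {a C r : ℝ} {m n : ℕ} (hn : n ≠ 0)
    (hC : 0 ≤ C) (hr : 0 < r) (h : a ^ n * r ^ m ≤ C) :
    a ≤ C ^ (n⁻¹ : ℝ) * r ^ (-(m : ℝ) / n) := by
  rcases lt_or_ge a 0 with ha | ha
  · exact ha.le.trans (by positivity)
  rw [← pow_le_pow_iff_left₀ ha (by positivity) hn, mul_pow, rpow_inv_natCast_pow hC hn,
    ← rpow_mul_natCast hr.le, div_mul_cancel₀ _ (Nat.cast_ne_zero.2 hn), rpow_neg hr.le,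
    rpow_natCast, ← div_eq_mul_inv, le_div_iff₀ (by positivity)]
  exact h

theorem setLIntegral_Ioi_one_ofReal_mul_rpow_lt_top (C : ℝ) {p : ℝ} (hp : p < -1) :
    ∫⁻ r in Ioi 1, ENNReal.ofReal (C * r ^ p) < ⊤ :=
  IntegrableOn.setLIntegral_lt_top ((integrableOn_Ioi_rpow_of_lt hp one_pos).const_mul C)

theorem setLIntegral_Ioo_ofReal_sq_mul_mul_rpow_lt_top (C : ℝ) {p : ℝ} (hp : -3 < p) :
    ∫⁻ r in Ioo 0 1, ENNReal.ofReal (r ^ 2 * (C * r ^ p)) < ⊤ := by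
  have h : ∀ r ∈ Ioo (0 : ℝ) 1, ENNReal.ofReal (r ^ 2 * (C * r ^ p)) =
      ENNReal.ofReal (C * r ^ (p + 2)) := fun r hr => by
    rw [rpow_add hr.1, rpow_two]
    ring_nf
  rw [setLIntegral_congr_fun measurableSet_Ioo h]
  have hint : IntegrableOn (fun r : ℝ => r ^ (p + 2)) (Ioo 0 1) :=
    (intervalIntegral.integrableOn_Ioo_rpow_iff one_pos).2 (by linarith)
  exact IntegrableOn.setLIntegral_lt_top (hint.const_mul C)

theorem sq_mul_pow_five_le {A K s y r c : ℝ} (hA : 0 < A) (hK : 1 ≤ K) (hy : 0 < y)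
    (hys : y ≤ s) (hr : 0 < r) (hc : r * (A * y) = c) :
    (c * A * y ^ 2 / (K * r ^ 2 * (A * s + 2 * y ^ 2))) ^ 2 * r ^ 5 ≤ c ^ 3 := by
  have hs : 0 < s := hy.trans_le hys
  have hc₀ : 0 < c := hc ▸ by positivity
  set D := A * s + 2 * y ^ 2
  have hD : 0 < D := by positivity
  have hAD : A * y ^ 3 ≤ D ^ 2 := by
    nlinarith [sq_nonneg (A * s - 2 * y ^ 2),
      mul_le_mul_of_nonneg_left hys (by positivity : 0 ≤ A * y ^ 2)]
  have hK₀ : 0 < K := one_pos.trans_le hK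
  rw [div_pow, div_mul_eq_mul_div, div_le_iff₀ (by positivity)]
  calc (c * A * y ^ 2) ^ 2 * r ^ 5 = c ^ 2 * (r * (A * y)) * r ^ 4 * (A * y ^ 3) := by ring
    _ ≤ c ^ 2 * c * r ^ 4 * D ^ 2 := by rw [hc]; gcongr
    _ ≤ c ^ 2 * c * r ^ 4 * D ^ 2 * K ^ 2 :=
        le_mul_of_one_le_right (by positivity) (one_le_pow₀ hK)
    _ = c ^ 3 * (K * r ^ 2 * D) ^ 2 := by ring

theorem mul_cube_mul_pow_eight_le {A B K s y r c : ℝ} (hA : 0 < A) (hB : 0 ≤ B) (hK : 1 ≤ K)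
    (hy : 0 < y) (hBs : B / 2 ≤ s) (hr : 0 < r) (hc : r * (A * y) = c) :
    B * (c * A * y ^ 2 / (K * r ^ 2 * (A * s + 2 * y ^ 2))) ^ 3 * r ^ 8 ≤ c ^ 5 := by
  have hs : 0 ≤ s := by linarith
  have hc₀ : 0 < c := hc ▸ by positivity
  set D := A * s + 2 * y ^ 2
  have hD : 0 < D := by positivity
  have hABD : B * A * y ^ 4 ≤ D ^ 3 := by
    have h₁ : A * B ≤ 2 * D := by nlinarith [mul_le_mul_of_nonneg_left hBs hA.le]
    have h₂ : (2 * y ^ 2) ^ 2 ≤ D ^ 2 := by gcongr; nlinarith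
    nlinarith [mul_le_mul h₁ h₂ (by positivity) (by positivity)]
  have hK₀ : 0 < K := one_pos.trans_le hK
  rw [div_pow, mul_div_assoc', div_mul_eq_mul_div, div_le_iff₀ (by positivity)]
  calc B * (c * A * y ^ 2) ^ 3 * r ^ 8 = c ^ 3 * (r * (A * y)) ^ 2 * r ^ 6 * (B * A * y ^ 4) := by
        ring
    _ ≤ c ^ 3 * c ^ 2 * r ^ 6 * D ^ 3 := by rw [hc]; gcongr
    _ ≤ c ^ 3 * c ^ 2 * r ^ 6 * D ^ 3 * K ^ 3 :=
        le_mul_of_one_le_right (by positivity) (one_le_pow₀ hK)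
    _ = c ^ 5 * (K * r ^ 2 * D) ^ 3 := by ring

noncomputable def rootB (B t : ℝ) : ℝ := √(t ^ 2 + B ^ 2 / 4)

noncomputable def levelCoeff (B ε t : ℝ) : ℝ := 2 * rootB B t + ε * B

noncomputable def levelMap (B ε t : ℝ) : ℝ := levelCoeff B ε t * t

noncomputable def levelDensity (B ε t : ℝ) : ℝ := (1 / 2 + ε * B / (4 * rootB B t)) * t ^ 2

section Level

variable {B ε : ℝ}

theorem rootB_pos (hB : B ≠ 0) (t : ℝ) : 0 < rootB B t :=
  sqrt_pos.2 (by positivity)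

theorem le_rootB (B t : ℝ) : t ≤ rootB B t :=
  le_sqrt_of_sq_le (by nlinarith)

theorem half_lt_rootB (B : ℝ) {t : ℝ} (ht : t ≠ 0) : B / 2 < rootB B t :=
  lt_sqrt_of_sq_lt (by nlinarith [pow_pos (abs_pos.2 ht) 2, sq_abs t])

theorem levelCoeff_pos (hB : 0 ≤ B) (hε : -1 ≤ ε) {t : ℝ} (ht : t ≠ 0) :
    0 < levelCoeff B ε t := by
  unfold levelCoeff
  nlinarith [half_lt_rootB B ht, mul_nonneg hB (neg_le_iff_add_nonneg.1 hε)]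

theorem hasStrictDerivAt_rootB (hB : B ≠ 0) (t : ℝ) :
    HasStrictDerivAt (rootB B) (t / rootB B t) t := by
  refine (((hasStrictDerivAt_pow 2 t).add_const (B ^ 2 / 4)).sqrt (by positivity)).congr_deriv ?_
  have := (rootB_pos hB t).ne'
  rw [rootB] at this ⊢
  field_simp
  norm_num

theorem hasStrictDerivAt_levelMap (hB : B ≠ 0) (ε t : ℝ) :
    HasStrictDerivAt (levelMap B ε) (levelCoeff B ε t + 2 * t ^ 2 / rootB B t) t := by
  refine ((((hasStrictDerivAt_rootB hB t).const_mul 2).add_const (ε * B)).mul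
    (hasStrictDerivAt_id t)).congr_deriv ?_
  have := (rootB_pos hB t).ne'
  rw [levelCoeff, id]
  field_simp
  ring

theorem levelMap_strictMono (hB : 0 < B) (hε : -1 ≤ ε) : StrictMono (levelMap B ε) := by
  have hderiv : ∀ t ≠ 0, 0 < deriv (levelMap B ε) t := fun t ht => by
    rw [(hasStrictDerivAt_levelMap hB.ne' ε t).hasDerivAt.deriv]
    exact add_pos (levelCoeff_pos hB.le hε ht) (div_pos (by positivity) (rootB_pos hB.ne' t))
  have hcont : ContinuousOn (levelMap B ε) univ := fun t _ =>
    (hasStrictDerivAt_levelMap hB.ne' ε t).hasDerivAt.continuousAt.continuousWithinAt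
  refine StrictMonoOn.Iic_union_Ici (a := 0) ?_ ?_
  · refine strictMonoOn_of_deriv_pos (convex_Iic 0) (hcont.mono (subset_univ _)) fun t ht => ?_
    rw [interior_Iic] at ht
    exact hderiv t ht.ne
  · refine strictMonoOn_of_deriv_pos (convex_Ici 0) (hcont.mono (subset_univ _)) fun t ht => ?_
    rw [interior_Ici] at ht
    exact hderiv t ht.ne'

theorem continuous_levelDensity (hB : B ≠ 0) (ε : ℝ) : Continuous (levelDensity B ε) := by
  have hroot : Continuous (rootB B) := continuous_iff_continuousAt.2 fun t =>
    (hasStrictDerivAt_rootB hB t).hasDerivAt.continuousAt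
  have hne : ∀ t, 4 * rootB B t ≠ 0 := fun t => (mul_pos four_pos (rootB_pos hB t)).ne'
  exact (continuous_const.add (continuous_const.div (continuous_const.mul hroot) hne)).mul
    (continuous_pow 2)

theorem neg_deriv_eq_of_levelMap_eq {c r : ℝ} {x H : ℝ → ℝ} (hB : 0 < B) (hε : -1 ≤ ε)
    (hr : 0 < r) (hxr : x r ≠ 0) (hx : ∀ u, 0 < u → levelMap B ε (x u) = c / u)
    (hH : ∀ u, 0 < u → H u = 1 / (4 * π) * ∫ t in (0 : ℝ)..x u, levelDensity B ε t) :
    -deriv H r = c * levelCoeff B ε (x r) * x r ^ 2 /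
      (16 * π * r ^ 2 * (levelCoeff B ε (x r) * rootB B (x r) + 2 * x r ^ 2)) := by
  set y := x r
  have hA := levelCoeff_pos hB.le hε hxr
  have hs := rootB_pos hB.ne' y
  have hF := hasStrictDerivAt_levelMap hB.ne' ε y
  have hF' : levelCoeff B ε y + 2 * y ^ 2 / rootB B y ≠ 0 := by positivity
  have hxd : HasDerivAt x _ r :=
    hasDerivAt_of_injective_of_comp_eventuallyEq (levelMap_strictMono hB hε).injective hF hF'
      ((hasDerivAt_inv hr.ne').const_mul c) <| by
        filter_upwards [Ioi_mem_nhds hr] with u hu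
        rw [Function.comp_apply, hx u hu, div_eq_mul_inv]
  have hHd := ((((continuous_levelDensity hB.ne' ε).integral_hasStrictDerivAt 0 y).hasDerivAt.comp
    r hxd).const_mul (1 / (4 * π))).congr_of_eventuallyEq <| by
      filter_upwards [Ioi_mem_nhds hr] with u hu
      exact hH u hu
  rw [hHd.deriv, levelDensity]
  rw [levelCoeff] at hA hF' ⊢
  field_simp
  ring

theorem neg_deriv_le_rpow_of_levelMap_eq {c r : ℝ} {x H : ℝ → ℝ} (hB : 0 < B)
    (hε : -1 ≤ ε) (hc : 0 < c) (hr : 0 < r) (hx : ∀ u, 0 < u → levelMap B ε (x u) = c / u)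
    (hH : ∀ u, 0 < u → H u = 1 / (4 * π) * ∫ t in (0 : ℝ)..x u, levelDensity B ε t) :
    -deriv H r ≤ (c ^ 3) ^ (2⁻¹ : ℝ) * r ^ (-5 / 2 : ℝ) ∧
      B ^ ((1 : ℝ) / 3) * -deriv H r ≤ (c ^ 5) ^ (3⁻¹ : ℝ) * r ^ (-8 / 3 : ℝ) := by
  have hxr : 0 < x r := (levelMap_strictMono hB hε).lt_iff_lt.1 <| by
    rw [hx r hr]
    simpa [levelMap] using div_pos hc hr
  have hA := levelCoeff_pos hB.le hε hxr.ne'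
  have hcr : r * (levelCoeff B ε (x r) * x r) = c := by
    rw [← levelMap, hx r hr]
    field_simp
  have hB3 : (B ^ ((1 : ℝ) / 3)) ^ 3 = B := by
    rw [← rpow_natCast, ← rpow_mul hB.le]
    norm_num
  have hK : (1 : ℝ) ≤ 16 * π := by linarith [pi_gt_three]
  have h₂ := sq_mul_pow_five_le hA hK hxr (le_rootB B _) hr hcr
  have h₃ := mul_cube_mul_pow_eight_le hA hB.le hK hxr (half_lt_rootB B hxr.ne').le hr hcr
  rw [← neg_deriv_eq_of_levelMap_eq hB hε hr hxr.ne' hx hH] at h₂ h₃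
  rw [← hB3, ← mul_pow] at h₃
  constructor
  · simpa only [Nat.cast_ofNat] using
      le_rpow_inv_mul_rpow_of_pow_mul_pow_le (m := 5) two_ne_zero (by positivity) hr h₂
  · simpa only [Nat.cast_ofNat] using
      le_rpow_inv_mul_rpow_of_pow_mul_pow_le (m := 8) three_ne_zero (by positivity) hr h₃

end Level

/-- Fix `γ > 0`.  There exist measurable functions
`f₊, f₋, h₊, h₋ : (0,∞) → [0,∞)` such that for a.e. `r > 0`:
`B^(1/3)·g_{B,+}(r) ≤ f₊(r)` and `B^(1/3)·g_{B,-}(r) ≤ f₋(r)` for all `B > 1`, and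
`g_{B,+}(r) ≤ h₊(r)` and `g_{B,-}(r) ≤ h₋(r)` for all `B ∈ (0,1)`; moreover
`∫₀¹ r²·f_±(r) dr < ∞`, `∫₁^∞ f_±(r) dr < ∞`, `∫₀¹ r²·h_±(r) dr < ∞` and
`∫₁^∞ h_±(r) dr < ∞`. -/
theorem stmt_18 (γ : ℝ) (hγ : 0 < γ)
    (x h g : ℝ → ℝ → ℝ → ℝ)
    (hx : ∀ B : ℝ, 0 < B → ∀ ε : ℝ, (ε = 1 ∨ ε = -1) → ∀ r : ℝ, r ≠ 0 →
      (2 * Real.sqrt (x B ε r ^ 2 + B ^ 2 / 4) + ε * B) * x B ε r = Real.pi / (γ * r))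
    (hh : ∀ B : ℝ, 0 < B → ∀ ε : ℝ, (ε = 1 ∨ ε = -1) → ∀ r : ℝ, r ≠ 0 →
      h B ε r = (1 / (4 * Real.pi)) *
        (if 0 < r then
          ∫ t in (0 : ℝ)..(x B ε r),
            (1 / 2 + ε * B / (4 * Real.sqrt (t ^ 2 + B ^ 2 / 4))) * t ^ 2
         else
          ∫ t in (x B ε r)..(0 : ℝ),
            (1 / 2 + ε * B / (4 * Real.sqrt (t ^ 2 + B ^ 2 / 4))) * t ^ 2))
    (hg : ∀ B : ℝ, 0 < B → ∀ ε : ℝ, (ε = 1 ∨ ε = -1) → ∀ r : ℝ, r ≠ 0 →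
      g B ε r = if 0 < r then -(deriv (h B ε) r) else deriv (h B ε) r) :
    ∃ fp fm hp hm : ℝ → ℝ,
      Measurable fp ∧ Measurable fm ∧ Measurable hp ∧ Measurable hm ∧
      (∀ r : ℝ, 0 < r → 0 ≤ fp r ∧ 0 ≤ fm r ∧ 0 ≤ hp r ∧ 0 ≤ hm r) ∧
      (∀ᵐ r ∂(volume.restrict (Set.Ioi (0 : ℝ))),
        (∀ B : ℝ, 1 < B →
          B ^ ((1 : ℝ) / 3) * g B 1 r ≤ fp r ∧ B ^ ((1 : ℝ) / 3) * g B (-1) r ≤ fm r) ∧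
        (∀ B ∈ Set.Ioo (0 : ℝ) 1, g B 1 r ≤ hp r ∧ g B (-1) r ≤ hm r)) ∧
      (∫⁻ r in Set.Ioo (0 : ℝ) 1, ENNReal.ofReal (r ^ 2 * fp r) < ⊤) ∧
      (∫⁻ r in Set.Ioo (0 : ℝ) 1, ENNReal.ofReal (r ^ 2 * fm r) < ⊤) ∧
      (∫⁻ r in Set.Ioi (1 : ℝ), ENNReal.ofReal (fp r) < ⊤) ∧
      (∫⁻ r in Set.Ioi (1 : ℝ), ENNReal.ofReal (fm r) < ⊤) ∧
      (∫⁻ r in Set.Ioo (0 : ℝ) 1, ENNReal.ofReal (r ^ 2 * hp r) < ⊤) ∧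
      (∫⁻ r in Set.Ioo (0 : ℝ) 1, ENNReal.ofReal (r ^ 2 * hm r) < ⊤) ∧
      (∫⁻ r in Set.Ioi (1 : ℝ), ENNReal.ofReal (hp r) < ⊤) ∧
      (∫⁻ r in Set.Ioi (1 : ℝ), ENNReal.ofReal (hm r) < ⊤) := by
  set c := π / γ
  have key : ∀ B, 0 < B → ∀ ε : ℝ, (ε = 1 ∨ ε = -1) → ∀ r, 0 < r →
      g B ε r ≤ (c ^ 3) ^ (2⁻¹ : ℝ) * r ^ (-5 / 2 : ℝ) ∧
        B ^ ((1 : ℝ) / 3) * g B ε r ≤ (c ^ 5) ^ (3⁻¹ : ℝ) * r ^ (-8 / 3 : ℝ) := by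
    intro B hB ε hε r hr
    rw [hg B hB ε hε r hr.ne', if_pos hr]
    refine neg_deriv_le_rpow_of_levelMap_eq hB (by rcases hε with rfl | rfl <;> norm_num)
      (by positivity) hr (fun u hu => (hx B hB ε hε u hu.ne').trans (div_div _ _ _).symm)
      fun u hu => ?_
    rw [hh B hB ε hε u hu.ne', if_pos hu]
    rfl
  refine ⟨fun r => (c ^ 5) ^ (3⁻¹ : ℝ) * r ^ (-8 / 3 : ℝ),
    fun r => (c ^ 5) ^ (3⁻¹ : ℝ) * r ^ (-8 / 3 : ℝ),
    fun r => (c ^ 3) ^ (2⁻¹ : ℝ) * r ^ (-5 / 2 : ℝ),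
    fun r => (c ^ 3) ^ (2⁻¹ : ℝ) * r ^ (-5 / 2 : ℝ),
    by fun_prop, by fun_prop, by fun_prop, by fun_prop,
    fun r hr => ⟨by positivity, by positivity, by positivity, by positivity⟩,
    ae_restrict_of_forall_mem measurableSet_Ioi fun r (hr : 0 < r) => ⟨fun B hB => ?_,
      fun B hB => ⟨(key B hB.1 1 (Or.inl rfl) r hr).1,
        (key B hB.1 (-1) (Or.inr rfl) r hr).1⟩⟩,
    setLIntegral_Ioo_ofReal_sq_mul_mul_rpow_lt_top _ (by norm_num),
    setLIntegral_Ioo_ofReal_sq_mul_mul_rpow_lt_top _ (by norm_num),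
    setLIntegral_Ioi_one_ofReal_mul_rpow_lt_top _ (by norm_num),
    setLIntegral_Ioi_one_ofReal_mul_rpow_lt_top _ (by norm_num),
    setLIntegral_Ioo_ofReal_sq_mul_mul_rpow_lt_top _ (by norm_num),
    setLIntegral_Ioo_ofReal_sq_mul_mul_rpow_lt_top _ (by norm_num),
    setLIntegral_Ioi_one_ofReal_mul_rpow_lt_top _ (by norm_num),
    setLIntegral_Ioi_one_ofReal_mul_rpow_lt_top _ (by norm_num)⟩
  have hB₀ : 0 < B := one_pos.trans hB
  exact ⟨(key B hB₀ 1 (Or.inl rfl) r hr).2, (key B hB₀ (-1) (Or.inr rfl) r hr).2⟩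
end
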